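/- Let U₀, U be d×d unitaries with additive error A := U₀ - U, O a d×d Hermitian matrix, r a positive integer, and μ₁ a 1-design measure on unit vectors (∫ |ψ⟩⟨ψ| dμ₁ = I/d). Then ∫ |⟨ψ| U₀^r O (U₀†)^r |ψ⟩ - ⟨ψ| U^r O (U†)^r |ψ⟩| dμ₁(ψ) ≤ 2 r (Tr((A A†)²)/d)^{1/4} (Tr((O O†)²)/d)^{1/4}. -/

import Mathlib

open Matrix MeasureTheory
set_option linter.unusedSectionVars false
set_option linter.unusedVariables false
set_option maxHeartbeats 1000000

/-- The quadratic form `⟨ψ|A|ψ⟩ = ∑ᵢⱼ conj(ψᵢ) Aᵢⱼ ψⱼ`. -/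
noncomputable def qform {d : ℕ} (A : Matrix (Fin d) (Fin d) ℂ)
    (ψ : EuclideanSpace ℂ (Fin d)) : ℂ :=
  ∑ i, ∑ j, (starRingEnd ℂ) (ψ i) * A i j * ψ j

variable {d : ℕ}

lemma abs_apply_le (ψ : EuclideanSpace ℂ (Fin d)) (i : Fin d) : ‖ψ i‖ ≤ ‖ψ‖ := by
  have := EuclideanSpace.norm_eq ψ
  rw [this]
  have : ‖ψ i‖ = Real.sqrt (‖ψ i‖^2) := by rw [Real.sqrt_sq (norm_nonneg _)]
  calc ‖ψ i‖ = Real.sqrt (‖ψ i‖^2) := by rw [Real.sqrt_sq (norm_nonneg _)]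
    _ ≤ _ := by
        apply Real.sqrt_le_sqrt
        exact Finset.single_le_sum (f := fun j => ‖ψ j‖^2) (fun j _ => sq_nonneg _) (Finset.mem_univ i)

lemma qform_sub (M N : Matrix (Fin d) (Fin d) ℂ) (ψ : EuclideanSpace ℂ (Fin d)) :
    qform (M - N) ψ = qform M ψ - qform N ψ := by
  simp [qform, Matrix.sub_apply, mul_sub, sub_mul, Finset.sum_sub_distrib]

lemma qform_add (M N : Matrix (Fin d) (Fin d) ℂ) (ψ : EuclideanSpace ℂ (Fin d)) :
    qform (M + N) ψ = qform M ψ + qform N ψ := by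
  simp [qform, Matrix.add_apply, mul_add, add_mul, Finset.sum_add_distrib]

lemma qform_eq_dot (M : Matrix (Fin d) (Fin d) ℂ) (ψ : EuclideanSpace ℂ (Fin d)) :
    qform M ψ = star (ψ : Fin d → ℂ) ⬝ᵥ (M *ᵥ (ψ : Fin d → ℂ)) := by
  simp [qform, dotProduct, Matrix.mulVec, Finset.mul_sum, mul_assoc]

lemma qform_mul (P Q : Matrix (Fin d) (Fin d) ℂ) (ψ : EuclideanSpace ℂ (Fin d)) :
    qform (P * Q) ψ = ∑ k, (starRingEnd ℂ) ((Pᴴ *ᵥ (ψ : Fin d → ℂ)) k) * ((Q *ᵥ (ψ : Fin d → ℂ)) k) := by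
  have h1 : (∑ k, (starRingEnd ℂ) ((Pᴴ *ᵥ (ψ : Fin d → ℂ)) k) * ((Q *ᵥ (ψ : Fin d → ℂ)) k))
      = star (Pᴴ *ᵥ (ψ : Fin d → ℂ)) ⬝ᵥ (Q *ᵥ (ψ : Fin d → ℂ)) := by
    simp [dotProduct, Pi.star_apply, RCLike.star_def]
  rw [h1, Matrix.star_mulVec, conjTranspose_conjTranspose, qform_eq_dot,
    ← Matrix.mulVec_mulVec, Matrix.dotProduct_mulVec]

section integration
variable [MeasurableSpace (EuclideanSpace ℂ (Fin d))] [BorelSpace (EuclideanSpace ℂ (Fin d))]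
  {μ : Measure (EuclideanSpace ℂ (Fin d))} [IsProbabilityMeasure μ]

lemma cont_coord (i : Fin d) : Continuous fun ψ : EuclideanSpace ℂ (Fin d) => ψ i :=
  (EuclideanSpace.proj (𝕜 := ℂ) i).continuous

lemma integrable_entry (hunit : ∀ᵐ ψ ∂μ, ‖ψ‖ = 1) (i j : Fin d) :
    Integrable (fun ψ : EuclideanSpace ℂ (Fin d) => ψ i * (starRingEnd ℂ) (ψ j)) μ := by
  refine Integrable.mono' (integrable_const 1) ?_ ?_
  · exact ((cont_coord i).mul
      (Complex.continuous_conj.comp (cont_coord j))).aestronglyMeasurable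
  · filter_upwards [hunit] with ψ h
    have h1 := abs_apply_le ψ i
    have h2 := abs_apply_le ψ j
    rw [h] at h1 h2
    calc ‖ψ i * (starRingEnd ℂ) (ψ j)‖ = ‖ψ i‖ * ‖ψ j‖ := by
          simp
      _ ≤ 1 * 1 := by
          apply mul_le_mul h1 h2 (norm_nonneg _) zero_le_one
      _ = 1 := one_mul 1

lemma integrable_qform (hunit : ∀ᵐ ψ ∂μ, ‖ψ‖ = 1) (M : Matrix (Fin d) (Fin d) ℂ) :
    Integrable (fun ψ => qform M ψ) μ := by
  have : (fun ψ : EuclideanSpace ℂ (Fin d) => qform M ψ)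
      = fun ψ => ∑ i, ∑ j, (starRingEnd ℂ) (ψ i) * M i j * ψ j := rfl
  rw [this]
  apply integrable_finset_sum; intro i _
  apply integrable_finset_sum; intro j _
  refine (((integrable_entry hunit j i).const_mul (M i j)).congr ?_)
  exact Filter.Eventually.of_forall fun ψ => by ring

lemma integral_qform (hunit : ∀ᵐ ψ ∂μ, ‖ψ‖ = 1)
    (hdesign : ∀ i j, (∫ ψ, ψ i * (starRingEnd ℂ) (ψ j) ∂μ)
      = if i = j then (d : ℂ)⁻¹ else 0)
    (M : Matrix (Fin d) (Fin d) ℂ) :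
    ∫ ψ, qform M ψ ∂μ = M.trace / d := by
  have h0 : (fun ψ : EuclideanSpace ℂ (Fin d) => qform M ψ)
      = fun ψ => ∑ i, ∑ j, M i j * (ψ j * (starRingEnd ℂ) (ψ i)) := by
    funext ψ; simp only [qform]; congr 1; funext i; congr 1; funext j; ring
  rw [h0]
  rw [integral_finset_sum _ (fun i _ => by
    apply integrable_finset_sum; intro j _
    exact (integrable_entry hunit j i).const_mul (M i j))]
  have : ∀ i, (∫ ψ, ∑ j, M i j * (ψ j * (starRingEnd ℂ) (ψ i)) ∂μ)
      = ∑ j, M i j * (if j = i then (d : ℂ)⁻¹ else 0) := by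
    intro i
    rw [integral_finset_sum _ (fun j _ => (integrable_entry hunit j i).const_mul (M i j))]
    refine Finset.sum_congr rfl fun j _ => ?_
    rw [MeasureTheory.integral_const_mul, hdesign j i]
  simp only [this, mul_ite, mul_zero, Finset.sum_ite_eq', Finset.mem_univ, if_true]
  rw [Matrix.trace, div_eq_mul_inv, Finset.sum_mul]
  rfl

lemma qform_herm_eq (X : Matrix (Fin d) (Fin d) ℂ) (ψ : EuclideanSpace ℂ (Fin d)) :
    qform (Xᴴ * X) ψ
      = ((∑ k, Complex.normSq ((X *ᵥ (ψ : Fin d → ℂ)) k) : ℝ) : ℂ) := by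
  rw [qform_mul]
  push_cast
  refine Finset.sum_congr rfl fun k _ => ?_
  rw [Matrix.conjTranspose_conjTranspose, mul_comm, Complex.mul_conj]

lemma cont_mulVec (X : Matrix (Fin d) (Fin d) ℂ) (k : Fin d) :
    Continuous fun ψ : EuclideanSpace ℂ (Fin d) => (X *ᵥ (ψ : Fin d → ℂ)) k := by
  have : (fun ψ : EuclideanSpace ℂ (Fin d) => (X *ᵥ (ψ : Fin d → ℂ)) k)
      = fun ψ => ∑ j, X k j * ψ j := rfl
  rw [this]
  exact continuous_finset_sum _ fun j _ => continuous_const.mul (cont_coord j)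

lemma cont_normSqSum (X : Matrix (Fin d) (Fin d) ℂ) :
    Continuous fun ψ : EuclideanSpace ℂ (Fin d) =>
      ∑ k, Complex.normSq ((X *ᵥ (ψ : Fin d → ℂ)) k) :=
  continuous_finset_sum _ fun k _ => Complex.continuous_normSq.comp (cont_mulVec X k)

lemma normSqSum_nonneg (X : Matrix (Fin d) (Fin d) ℂ) (ψ : EuclideanSpace ℂ (Fin d)) :
    0 ≤ ∑ k, Complex.normSq ((X *ᵥ (ψ : Fin d → ℂ)) k) :=
  Finset.sum_nonneg fun k _ => Complex.normSq_nonneg _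

lemma normSqSum_bound (X : Matrix (Fin d) (Fin d) ℂ) (ψ : EuclideanSpace ℂ (Fin d))
    (h : ‖ψ‖ = 1) :
    ∑ k, Complex.normSq ((X *ᵥ (ψ : Fin d → ℂ)) k)
      ≤ ∑ k, (∑ j, ‖X k j‖) ^ 2 := by
  refine Finset.sum_le_sum fun k _ => ?_
  rw [← Complex.sq_norm]
  have h1 : ‖(X *ᵥ (ψ : Fin d → ℂ)) k‖ ≤ ∑ j, ‖X k j‖ := by
    calc ‖(X *ᵥ (ψ : Fin d → ℂ)) k‖
        = ‖∑ j, X k j * ψ j‖ := rfl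
      _ ≤ ∑ j, ‖X k j * ψ j‖ := norm_sum_le _ _
      _ ≤ ∑ j, ‖X k j‖ * 1 := by
          refine Finset.sum_le_sum fun j _ => ?_
          rw [norm_mul]
          have := abs_apply_le ψ j
          rw [h] at this
          exact mul_le_mul_of_nonneg_left this (norm_nonneg _)
      _ = ∑ j, ‖X k j‖ := by simp
  exact pow_le_pow_left₀ (norm_nonneg _) h1 2

lemma integral_normSqSum (hunit : ∀ᵐ ψ ∂μ, ‖ψ‖ = 1)
    (hdesign : ∀ i j, (∫ ψ, ψ i * (starRingEnd ℂ) (ψ j) ∂μ)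
      = if i = j then (d : ℂ)⁻¹ else 0)
    (X : Matrix (Fin d) (Fin d) ℂ) :
    ∫ ψ, (∑ k, Complex.normSq ((X *ᵥ (ψ : Fin d → ℂ)) k)) ∂μ
      = (Xᴴ * X).trace.re / d := by
  have h1 : ∀ ψ : EuclideanSpace ℂ (Fin d),
      (∑ k, Complex.normSq ((X *ᵥ (ψ : Fin d → ℂ)) k)) = (qform (Xᴴ * X) ψ).re := by
    intro ψ; rw [qform_herm_eq]; simp
  simp_rw [h1]
  rw [show (fun ψ => (qform (Xᴴ * X) ψ).re)
    = fun ψ => RCLike.re (K := ℂ) (qform (Xᴴ * X) ψ) from rfl]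
  rw [integral_re (integrable_qform hunit _), integral_qform hunit hdesign]
  simp [Complex.div_natCast_re]

lemma integrable_sqrt_mul (hunit : ∀ᵐ ψ ∂μ, ‖ψ‖ = 1) (P Q : Matrix (Fin d) (Fin d) ℂ) :
    Integrable (fun ψ : EuclideanSpace ℂ (Fin d) =>
      Real.sqrt (∑ k, Complex.normSq ((P *ᵥ (ψ : Fin d → ℂ)) k))
        * Real.sqrt (∑ k, Complex.normSq ((Q *ᵥ (ψ : Fin d → ℂ)) k))) μ := by
  refine Integrable.mono' (integrable_const
    (Real.sqrt (∑ k, (∑ j, ‖P k j‖) ^ 2)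
      * Real.sqrt (∑ k, (∑ j, ‖Q k j‖) ^ 2))) ?_ ?_
  · exact ((Real.continuous_sqrt.comp (cont_normSqSum P)).mul
      (Real.continuous_sqrt.comp (cont_normSqSum Q))).aestronglyMeasurable
  · filter_upwards [hunit] with ψ h
    rw [Real.norm_of_nonneg (mul_nonneg (Real.sqrt_nonneg _) (Real.sqrt_nonneg _))]
    exact mul_le_mul (Real.sqrt_le_sqrt (normSqSum_bound P ψ h))
      (Real.sqrt_le_sqrt (normSqSum_bound Q ψ h)) (Real.sqrt_nonneg _) (Real.sqrt_nonneg _)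

lemma memLp2_sqrt (hunit : ∀ᵐ ψ ∂μ, ‖ψ‖ = 1) (P : Matrix (Fin d) (Fin d) ℂ) :
    MemLp (fun ψ : EuclideanSpace ℂ (Fin d) =>
      Real.sqrt (∑ k, Complex.normSq ((P *ᵥ (ψ : Fin d → ℂ)) k))) (ENNReal.ofReal 2) μ := by
  refine MemLp.of_bound
    ((Real.continuous_sqrt.comp (cont_normSqSum P)).aestronglyMeasurable)
    (Real.sqrt (∑ k, (∑ j, ‖P k j‖) ^ 2)) ?_
  filter_upwards [hunit] with ψ h
  rw [Real.norm_of_nonneg (Real.sqrt_nonneg _)]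
  exact Real.sqrt_le_sqrt (normSqSum_bound P ψ h)

/-- The key per-term bound. -/
lemma per_term (hunit : ∀ᵐ ψ ∂μ, ‖ψ‖ = 1)
    (hdesign : ∀ i j, (∫ ψ, ψ i * (starRingEnd ℂ) (ψ j) ∂μ)
      = if i = j then (d : ℂ)⁻¹ else 0)
    (P Q : Matrix (Fin d) (Fin d) ℂ) :
    ∫ ψ, ‖qform (P * Q) ψ‖ ∂μ
      ≤ Real.sqrt ((P * Pᴴ).trace.re / d) * Real.sqrt ((Qᴴ * Q).trace.re / d) := by
  set f : EuclideanSpace ℂ (Fin d) → ℝ :=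
    fun ψ => ∑ k, Complex.normSq ((Pᴴ *ᵥ (ψ : Fin d → ℂ)) k) with hf
  set g : EuclideanSpace ℂ (Fin d) → ℝ :=
    fun ψ => ∑ k, Complex.normSq ((Q *ᵥ (ψ : Fin d → ℂ)) k) with hg
  have hpt : ∀ ψ : EuclideanSpace ℂ (Fin d),
      ‖qform (P * Q) ψ‖ ≤ Real.sqrt (f ψ) * Real.sqrt (g ψ) := by
    intro ψ
    rw [qform_mul]
    calc ‖∑ k, (starRingEnd ℂ) ((Pᴴ *ᵥ (ψ : Fin d → ℂ)) k)
          * ((Q *ᵥ (ψ : Fin d → ℂ)) k)‖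
        ≤ ∑ k, ‖(starRingEnd ℂ) ((Pᴴ *ᵥ (ψ : Fin d → ℂ)) k)
          * ((Q *ᵥ (ψ : Fin d → ℂ)) k)‖ := norm_sum_le _ _
      _ = ∑ k, ‖(Pᴴ *ᵥ (ψ : Fin d → ℂ)) k‖
          * ‖(Q *ᵥ (ψ : Fin d → ℂ)) k‖ := by
          simp [norm_mul]
      _ ≤ Real.sqrt (∑ k, ‖(Pᴴ *ᵥ (ψ : Fin d → ℂ)) k‖ ^ 2)
          * Real.sqrt (∑ k, ‖(Q *ᵥ (ψ : Fin d → ℂ)) k‖ ^ 2) :=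
          Real.sum_mul_le_sqrt_mul_sqrt _ _ _
      _ = Real.sqrt (f ψ) * Real.sqrt (g ψ) := by
          simp [hf, hg, Complex.sq_norm]
  have h2 : ∫ ψ, ‖qform (P * Q) ψ‖ ∂μ
      ≤ ∫ ψ, Real.sqrt (f ψ) * Real.sqrt (g ψ) ∂μ := by
    refine integral_mono ?_ (integrable_sqrt_mul hunit Pᴴ Q) hpt
    have := (integrable_qform hunit (P * Q)).norm
    simpa using this
  have h3 : ∫ ψ, Real.sqrt (f ψ) * Real.sqrt (g ψ) ∂μ
      ≤ (∫ ψ, Real.sqrt (f ψ) ^ (2:ℝ) ∂μ) ^ ((1:ℝ)/2)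
        * (∫ ψ, Real.sqrt (g ψ) ^ (2:ℝ) ∂μ) ^ ((1:ℝ)/2) := by
    refine integral_mul_le_Lp_mul_Lq_of_nonneg ⟨by norm_num, by norm_num, by norm_num⟩ ?_ ?_
      (memLp2_sqrt hunit Pᴴ) (memLp2_sqrt hunit Q)
    · exact Filter.Eventually.of_forall fun ψ => Real.sqrt_nonneg _
    · exact Filter.Eventually.of_forall fun ψ => Real.sqrt_nonneg _
  have hsq : ∀ x : ℝ, 0 ≤ x → Real.sqrt x ^ (2:ℝ) = x := by
    intro x hx
    rw [show (2:ℝ) = ((2:ℕ):ℝ) by norm_num, Real.rpow_natCast, Real.sq_sqrt hx]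
  have h4 : (∫ ψ, Real.sqrt (f ψ) ^ (2:ℝ) ∂μ) = (P * Pᴴ).trace.re / d := by
    have : ∀ ψ : EuclideanSpace ℂ (Fin d), Real.sqrt (f ψ) ^ (2:ℝ) = f ψ :=
      fun ψ => hsq _ (normSqSum_nonneg _ _)
    simp_rw [this, hf]
    rw [integral_normSqSum hunit hdesign, Matrix.conjTranspose_conjTranspose]
  have h5 : (∫ ψ, Real.sqrt (g ψ) ^ (2:ℝ) ∂μ) = (Qᴴ * Q).trace.re / d := by
    have : ∀ ψ : EuclideanSpace ℂ (Fin d), Real.sqrt (g ψ) ^ (2:ℝ) = g ψ :=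
      fun ψ => hsq _ (normSqSum_nonneg _ _)
    simp_rw [this, hg]
    rw [integral_normSqSum hunit hdesign]
  rw [h4, h5] at h3
  rw [Real.sqrt_eq_rpow, Real.sqrt_eq_rpow]
  exact h2.trans h3

end integration

lemma trace_mul_conjTranspose_eq (M : Matrix (Fin d) (Fin d) ℂ) :
    (M * Mᴴ).trace = ((∑ i, ∑ k, Complex.normSq (M i k) : ℝ) : ℂ) := by
  rw [Matrix.trace]
  push_cast
  refine Finset.sum_congr rfl fun i _ => ?_
  simp only [Matrix.diag_apply, Matrix.mul_apply, Matrix.conjTranspose_apply]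
  refine Finset.sum_congr rfl fun k _ => ?_
  rw [RCLike.star_def, Complex.mul_conj]

lemma trace_re_nonneg (M : Matrix (Fin d) (Fin d) ℂ) : 0 ≤ (M * Mᴴ).trace.re := by
  rw [trace_mul_conjTranspose_eq]
  simp only [Complex.ofReal_re]
  exact Finset.sum_nonneg fun i _ => Finset.sum_nonneg fun k _ => Complex.normSq_nonneg _

set_option maxHeartbeats 1000000 in
lemma trace_sandwich {V W M : Matrix (Fin d) (Fin d) ℂ}
    (hV : Vᴴ * V = 1) (hW : W * Wᴴ = 1) :
    ((V * M * W) * (V * M * W)ᴴ).trace = (M * Mᴴ).trace := by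
  have key : (V * M * W) * (V * M * W)ᴴ = V * (M * Mᴴ) * Vᴴ := by
    rw [Matrix.conjTranspose_mul, Matrix.conjTranspose_mul]
    simp only [Matrix.mul_assoc]
    rw [← Matrix.mul_assoc W Wᴴ, hW, Matrix.one_mul]
  rw [key, Matrix.trace_mul_cycle, ← Matrix.mul_assoc, hV, Matrix.one_mul]

/-- `√(tr(MMᴴ)/d) ≤ (tr((MMᴴ)²)/d)^{1/4}`. -/
lemma sqrt_le_fourth (M : Matrix (Fin d) (Fin d) ℂ) (hd : 0 < d) :
    Real.sqrt ((M * Mᴴ).trace.re / d)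
      ≤ ((M * Mᴴ * M * Mᴴ).trace.re / d) ^ ((1:ℝ)/4) := by
  set H := M * Mᴴ with hH
  have hHherm : Hᴴ = H := by
    rw [hH, Matrix.conjTranspose_mul, Matrix.conjTranspose_conjTranspose]
  have hq_eq : (M * Mᴴ * M * Mᴴ).trace = (H * Hᴴ).trace := by
    rw [hHherm, hH, Matrix.mul_assoc]
  set t : ℝ := H.trace.re with ht
  set q : ℝ := (H * Hᴴ).trace.re with hqdef
  have hq0 : 0 ≤ q := trace_re_nonneg H
  have ht0 : 0 ≤ t := trace_re_nonneg M
  -- t² ≤ d * q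
  have hkey : t ^ 2 ≤ d * q := by
    have htsum : t = ∑ i, (H i i).re := by
      rw [ht, Matrix.trace, Complex.re_sum]; rfl
    have hqsum : q = ∑ i, ∑ j, Complex.normSq (H i j) := by
      rw [hqdef, trace_mul_conjTranspose_eq]; simp
    have h1 : t ^ 2 ≤ d * ∑ i, (H i i).re ^ 2 := by
      rw [htsum]
      have := sq_sum_le_card_mul_sum_sq (s := (Finset.univ : Finset (Fin d)))
        (f := fun i => (H i i).re)
      simpa using this
    have h2 : ∑ i, (H i i).re ^ 2 ≤ q := by
      rw [hqsum]
      refine Finset.sum_le_sum fun i _ => ?_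
      calc (H i i).re ^ 2 ≤ Complex.normSq (H i i) := by
            rw [Complex.normSq_apply]; nlinarith [sq_nonneg (H i i).im]
        _ ≤ ∑ j, Complex.normSq (H i j) :=
            Finset.single_le_sum (fun j _ => Complex.normSq_nonneg _) (Finset.mem_univ i)
    calc t ^ 2 ≤ d * ∑ i, (H i i).re ^ 2 := h1
      _ ≤ d * q := by
          apply mul_le_mul_of_nonneg_left h2 (by positivity)
  have hdR : (0:ℝ) < d := by exact_mod_cast hd
  rw [hq_eq]
  have hx2 : (t / d) ^ 2 ≤ q / d := by
    rw [div_pow, div_le_div_iff₀ (by positivity) hdR]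
    nlinarith [mul_le_mul_of_nonneg_right hkey (le_of_lt hdR)]
  have hx0 : 0 ≤ t / d := by positivity
  have h3 : t / d ≤ Real.sqrt (q / d) :=
    (Real.le_sqrt hx0 (by positivity)).mpr hx2
  calc Real.sqrt (t / d) ≤ Real.sqrt (Real.sqrt (q / d)) := Real.sqrt_le_sqrt h3
    _ = (q / d) ^ ((1:ℝ)/4) := by
        rw [Real.sqrt_eq_rpow, Real.sqrt_eq_rpow, ← Real.rpow_mul (by positivity)]
        norm_num

lemma qform_zero (ψ : EuclideanSpace ℂ (Fin d)) : qform (0 : Matrix (Fin d) (Fin d) ℂ) ψ = 0 := by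
  simp [qform]

lemma qform_sum {ι : Type*} (s : Finset ι) (f : ι → Matrix (Fin d) (Fin d) ℂ)
    (ψ : EuclideanSpace ℂ (Fin d)) :
    qform (∑ k ∈ s, f k) ψ = ∑ k ∈ s, qform (f k) ψ := by
  classical
  induction s using Finset.induction_on with
  | empty => simp [qform_zero]
  | insert _ _ hx ih =>
    rw [Finset.sum_insert hx, Finset.sum_insert hx, qform_add, ih]

lemma pow_unitary {V : Matrix (Fin d) (Fin d) ℂ} (h1 : V * Vᴴ = 1) (h2 : Vᴴ * V = 1) (m : ℕ) :
    (V ^ m) * (V ^ m)ᴴ = 1 ∧ (V ^ m)ᴴ * (V ^ m) = 1 := by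
  induction m with
  | zero => simp
  | succ n ih =>
    constructor
    · rw [pow_succ, Matrix.conjTranspose_mul]
      simp only [Matrix.mul_assoc]
      rw [← Matrix.mul_assoc V Vᴴ, h1, Matrix.one_mul, ih.1]
    · rw [pow_succ, Matrix.conjTranspose_mul]
      simp only [Matrix.mul_assoc]
      rw [← Matrix.mul_assoc ((V ^ n)ᴴ) (V ^ n) V, ih.2, Matrix.one_mul, h2]

lemma mul_unitary_left {V W : Matrix (Fin d) (Fin d) ℂ} (hV : Vᴴ * V = 1) (hW : Wᴴ * W = 1) :
    (V * W)ᴴ * (V * W) = 1 := by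
  rw [Matrix.conjTranspose_mul]
  simp only [Matrix.mul_assoc]
  rw [← Matrix.mul_assoc Vᴴ V W, hV, Matrix.one_mul, hW]

/-- For unitaries `U₀, U` with additive error `A = U₀ - U`, Hermitian `O`, `r ≥ 1`,
and a 1-design measure `μ₁` on unit vectors (`∫ |ψ⟩⟨ψ| dμ₁ = I/d`, stated entrywise):
`∫ |⟨ψ|U₀^r O (U₀ᴴ)^r|ψ⟩ - ⟨ψ|U^r O (Uᴴ)^r|ψ⟩| dμ₁
  ≤ 2 r (Tr((A Aᴴ)²)/d)^{1/4} (Tr((O Oᴴ)²)/d)^{1/4}`. -/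
theorem stmt_14 {d : ℕ} [MeasurableSpace (EuclideanSpace ℂ (Fin d))]
    [BorelSpace (EuclideanSpace ℂ (Fin d))]
    (μ : Measure (EuclideanSpace ℂ (Fin d)))
    [IsProbabilityMeasure μ] (hunit : ∀ᵐ ψ ∂μ, ‖ψ‖ = 1)
    (hdesign : ∀ i j, (∫ ψ, ψ i * (starRingEnd ℂ) (ψ j) ∂μ)
      = if i = j then (d : ℂ)⁻¹ else 0)
    (U₀ U O : Matrix (Fin d) (Fin d) ℂ)
    (hU₀ : U₀ * U₀ᴴ = 1 ∧ U₀ᴴ * U₀ = 1) (hU : U * Uᴴ = 1 ∧ Uᴴ * U = 1)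
    (hO : O.IsHermitian) (r : ℕ) (hr : 1 ≤ r)
    (A : Matrix (Fin d) (Fin d) ℂ) (hA : A = U₀ - U) :
    (∫ ψ, ‖qform (U₀ ^ r * O * (U₀ᴴ) ^ r) ψ
        - qform (U ^ r * O * (Uᴴ) ^ r) ψ‖ ∂μ)
      ≤ 2 * r * (((A * Aᴴ * A * Aᴴ).trace.re) / d) ^ ((1 : ℝ) / 4)
          * (((O * Oᴴ * O * Oᴴ).trace.re) / d) ^ ((1 : ℝ) / 4) := by
  rcases Nat.eq_zero_or_pos d with hd | hd
  · subst hd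
    have hL : (∫ ψ, ‖qform (U₀ ^ r * O * (U₀ᴴ) ^ r) ψ
        - qform (U ^ r * O * (Uᴴ) ^ r) ψ‖ ∂μ) = 0 := by
      have h0 : ∀ ψ : EuclideanSpace ℂ (Fin 0),
          ‖qform (U₀ ^ r * O * (U₀ᴴ) ^ r) ψ
            - qform (U ^ r * O * (Uᴴ) ^ r) ψ‖ = 0 := by
        intro ψ; simp [qform]
      simp only [h0, integral_zero]
    rw [hL]
    have h1 : (A * Aᴴ * A * Aᴴ).trace = 0 := by simp [Matrix.trace]
    have h2 : (O * Oᴴ * O * Oᴴ).trace = 0 := by simp [Matrix.trace]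
    rw [h1, h2]
    simp [Real.zero_rpow (by norm_num : (1:ℝ)/4 ≠ 0)]
  · obtain ⟨hU₀1, hU₀2⟩ := hU₀
    obtain ⟨hU1, hU2⟩ := hU
    set g1 : ℝ := Real.sqrt ((A * Aᴴ).trace.re / d) with hg1
    set g2 : ℝ := Real.sqrt ((O * Oᴴ).trace.re / d) with hg2
    set B : ℕ → Matrix (Fin d) (Fin d) ℂ := fun k => U₀ ^ k * U ^ (r - k) with hB
    set D : ℕ → Matrix (Fin d) (Fin d) ℂ := fun k => U₀ ^ k * A * U ^ (r - 1 - k) with hD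
    set T : ℕ → Matrix (Fin d) (Fin d) ℂ := fun k => B k * O * (B k)ᴴ with hT
    have hBu : ∀ k, (B k)ᴴ * (B k) = 1 := fun k =>
      mul_unitary_left (pow_unitary hU₀1 hU₀2 k).2 (pow_unitary hU1 hU2 (r - k)).2
    have htel : U₀ ^ r * O * (U₀ᴴ) ^ r - U ^ r * O * (Uᴴ) ^ r
        = ∑ k ∈ Finset.range r, (T (k + 1) - T k) := by
      rw [Finset.sum_range_sub (f := T)]
      have hTr : T r = U₀ ^ r * O * (U₀ᴴ) ^ r := by
        simp [hT, hB, Nat.sub_self, Matrix.conjTranspose_pow]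
      have hT0 : T 0 = U ^ r * O * (Uᴴ) ^ r := by
        simp [hT, hB, Matrix.conjTranspose_pow]
      rw [hTr, hT0]
    have hstep : ∀ k, k < r → T (k + 1) - T k
        = D k * (O * (B (k + 1))ᴴ) + (B k * O) * (D k)ᴴ := by
      intro k hk
      have hBk : B (k + 1) = B k + D k := by
        have h1 : r - k = (r - 1 - k) + 1 := by omega
        have h2 : r - (k + 1) = r - 1 - k := by omega
        have e1 : U ^ (r - k) = U * U ^ (r - 1 - k) := by rw [h1, pow_succ']
        have e2 : U₀ ^ (k + 1) = U₀ ^ k * U₀ := pow_succ _ _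
        simp only [hB, hD, h2, e2, e1, hA]
        generalize U₀ ^ k = X
        generalize U ^ (r - 1 - k) = Y
        noncomm_ring
      have : T (k + 1) = B (k + 1) * O * (B (k + 1))ᴴ := rfl
      rw [this, show T k = B k * O * (B k)ᴴ from rfl, hBk]
      simp only [Matrix.conjTranspose_add]
      noncomm_ring
    have hDtrace : ∀ k, (D k * (D k)ᴴ).trace = (A * Aᴴ).trace := fun k =>
      trace_sandwich (pow_unitary hU₀1 hU₀2 k).2 (pow_unitary hU1 hU2 (r - 1 - k)).1
    have hterm1 : ∀ k, (∫ ψ, ‖qform (D k * (O * (B (k + 1))ᴴ)) ψ‖ ∂μ)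
        ≤ g1 * g2 := by
      intro k
      have h := per_term hunit hdesign (D k) (O * (B (k + 1))ᴴ)
      have e2 : ((O * (B (k + 1))ᴴ)ᴴ * (O * (B (k + 1))ᴴ)).trace = (O * Oᴴ).trace := by
        have e : (O * (B (k + 1))ᴴ)ᴴ * (O * (B (k + 1))ᴴ)
            = (B (k + 1) * Oᴴ * 1) * (B (k + 1) * Oᴴ * 1)ᴴ := by
          simp [Matrix.conjTranspose_mul, Matrix.conjTranspose_conjTranspose,
            Matrix.mul_assoc]
        rw [e, trace_sandwich (hBu (k + 1)) (by simp),
          Matrix.conjTranspose_conjTranspose, Matrix.trace_mul_comm]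
      rwa [hDtrace k, e2] at h
    have hterm2 : ∀ k, (∫ ψ, ‖qform ((B k * O) * (D k)ᴴ) ψ‖ ∂μ)
        ≤ g1 * g2 := by
      intro k
      have h := per_term hunit hdesign (B k * O) ((D k)ᴴ)
      have e1 : ((B k * O) * (B k * O)ᴴ).trace = (O * Oᴴ).trace := by
        have e : (B k * O) * (B k * O)ᴴ = (B k * O * 1) * (B k * O * 1)ᴴ := by simp
        rw [e, trace_sandwich (hBu k) (by simp)]
      have e2 : (((D k)ᴴ)ᴴ * (D k)ᴴ).trace = (A * Aᴴ).trace := by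
        rw [Matrix.conjTranspose_conjTranspose]; exact hDtrace k
      rw [e1, e2] at h
      calc (∫ ψ, ‖qform ((B k * O) * (D k)ᴴ) ψ‖ ∂μ) ≤ g2 * g1 := h
        _ = g1 * g2 := mul_comm _ _
    have hpt : ∀ ψ : EuclideanSpace ℂ (Fin d),
        ‖qform (U₀ ^ r * O * (U₀ᴴ) ^ r) ψ - qform (U ^ r * O * (Uᴴ) ^ r) ψ‖
        ≤ ∑ k ∈ Finset.range r, (‖qform (D k * (O * (B (k + 1))ᴴ)) ψ‖
            + ‖qform ((B k * O) * (D k)ᴴ) ψ‖) := by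
      intro ψ
      rw [← qform_sub, htel, qform_sum]
      calc ‖∑ k ∈ Finset.range r, qform (T (k + 1) - T k) ψ‖
          ≤ ∑ k ∈ Finset.range r, ‖qform (T (k + 1) - T k) ψ‖ :=
            norm_sum_le _ _
        _ ≤ _ := by
            refine Finset.sum_le_sum fun k hk => ?_
            rw [hstep k (Finset.mem_range.mp hk), qform_add]
            exact norm_add_le _ _
    have hint1 : ∀ N : Matrix (Fin d) (Fin d) ℂ,
        Integrable (fun ψ => ‖qform N ψ‖) μ := by
      intro N
      have := (integrable_qform hunit N).norm
      simpa using this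
    have hMint : Integrable (fun ψ => ‖qform (U₀ ^ r * O * (U₀ᴴ) ^ r) ψ
        - qform (U ^ r * O * (Uᴴ) ^ r) ψ‖) μ := by
      refine (hint1 (U₀ ^ r * O * (U₀ᴴ) ^ r - U ^ r * O * (Uᴴ) ^ r)).congr
        (Filter.Eventually.of_forall fun ψ => ?_)
      simp only [qform_sub]
    have hle1 : (∫ ψ, ‖qform (U₀ ^ r * O * (U₀ᴴ) ^ r) ψ
          - qform (U ^ r * O * (Uᴴ) ^ r) ψ‖ ∂μ)
        ≤ ∫ ψ, ∑ k ∈ Finset.range r, (‖qform (D k * (O * (B (k + 1))ᴴ)) ψ‖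
            + ‖qform ((B k * O) * (D k)ᴴ) ψ‖) ∂μ :=
      integral_mono hMint (integrable_finset_sum _ fun k _ => (hint1 _).add (hint1 _)) hpt
    have hsum : (∫ ψ, ∑ k ∈ Finset.range r, (‖qform (D k * (O * (B (k + 1))ᴴ)) ψ‖
            + ‖qform ((B k * O) * (D k)ᴴ) ψ‖) ∂μ)
        = ∑ k ∈ Finset.range r, (∫ ψ, (‖qform (D k * (O * (B (k + 1))ᴴ)) ψ‖
            + ‖qform ((B k * O) * (D k)ᴴ) ψ‖) ∂μ) :=
      integral_finset_sum (Finset.range r)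
        (f := fun k ψ => ‖qform (D k * (O * (B (k + 1))ᴴ)) ψ‖
            + ‖qform ((B k * O) * (D k)ᴴ) ψ‖)
        (fun k _ => (hint1 _).add (hint1 _))
    rw [hsum] at hle1
    have hle2 : ∑ k ∈ Finset.range r, (∫ ψ, (‖qform (D k * (O * (B (k + 1))ᴴ)) ψ‖
            + ‖qform ((B k * O) * (D k)ᴴ) ψ‖) ∂μ)
        ≤ (r : ℝ) * (2 * (g1 * g2)) := by
      calc ∑ k ∈ Finset.range r, (∫ ψ, (‖qform (D k * (O * (B (k + 1))ᴴ)) ψ‖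
            + ‖qform ((B k * O) * (D k)ᴴ) ψ‖) ∂μ)
          ≤ ∑ _k ∈ Finset.range r, (2 * (g1 * g2)) := by
            refine Finset.sum_le_sum fun k hk => ?_
            rw [integral_add (hint1 _) (hint1 _)]
            have h1 := hterm1 k
            have h2 := hterm2 k
            linarith
        _ = (r : ℝ) * (2 * (g1 * g2)) := by
            rw [Finset.sum_const, Finset.card_range, nsmul_eq_mul]
    have ha := sqrt_le_fourth A hd
    have hb := sqrt_le_fourth O hd
    have hx : (0:ℝ) ≤ ((A * Aᴴ * A * Aᴴ).trace.re / d) ^ ((1:ℝ)/4) :=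
      le_trans (Real.sqrt_nonneg _) ha
    have hfin : (r : ℝ) * (2 * (g1 * g2))
        ≤ 2 * r * (((A * Aᴴ * A * Aᴴ).trace.re) / d) ^ ((1 : ℝ) / 4)
          * (((O * Oᴴ * O * Oᴴ).trace.re) / d) ^ ((1 : ℝ) / 4) := by
      have h1 : g1 * g2 ≤ (((A * Aᴴ * A * Aᴴ).trace.re) / d) ^ ((1 : ℝ) / 4)
          * (((O * Oᴴ * O * Oᴴ).trace.re) / d) ^ ((1 : ℝ) / 4) :=
        mul_le_mul ha hb (Real.sqrt_nonneg _) hx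
      calc (r : ℝ) * (2 * (g1 * g2)) = 2 * r * (g1 * g2) := by ring
        _ ≤ 2 * r * ((((A * Aᴴ * A * Aᴴ).trace.re) / d) ^ ((1 : ℝ) / 4)
            * (((O * Oᴴ * O * Oᴴ).trace.re) / d) ^ ((1 : ℝ) / 4)) := by
            apply mul_le_mul_of_nonneg_left h1 (by positivity)
        _ = _ := by ring
    exact hle1.trans (hle2.trans hfin)
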